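/- arXiv:1904.03504 — 2 statements merged into one kernel-verified Lean document; each statement's English description precedes it below -/
import Mathlib

section
/- Let f : X → Y be an almost isometry with constant C, let d_f(x,y) = inf_{x̃ ∈ X}(d_X(x,x̃) + C/2 + d_Y(f(x̃),y)), and let d ∈ D(X,Y) satisfy d(x,y) ≤ h(d_f(x,y)) for a monotone increasing function h : [0,∞) → [0,∞). Then there exists a constant K such that d(x,y) ≥ d_f(x,y) − K for all x ∈ X, y ∈ Y; in particular d and d_f are coarsely equivalent. (One can take K = C/2 + h(C/2).) -/
/-!
Taking `x̃ = x` in the infimum gives `d_f(x, y) ≤ C/2 + d(f x, y)`, and in particular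
`d_f(x, f x) ≤ C/2`, so `d(x, f x) ≤ h(C/2)`. The triangle inequality
`d(f x, y) ≤ d(x, f x) + d(x, y)` in `X ⊔ Y` then yields `d_f(x, y) - C/2 - h(C/2) ≤ d(x, y)`.
-/

/-- A metric on `X ⊔ Y` extending the metrics of `X` and `Y`. -/
structure GlueMetric (X Y : Type*) [MetricSpace X] [MetricSpace Y] where
  d : X → Y → ℝ
  nonneg : ∀ x y, 0 ≤ d x y
  tri₁ : ∀ x x' y, dist x x' ≤ d x y + d x' y
  tri₂ : ∀ x x' y, d x y ≤ dist x x' + d x' y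
  tri₃ : ∀ x y y', dist y y' ≤ d x y + d x y'
  tri₄ : ∀ x y y', d x y ≤ d x y' + dist y' y

section InducedDistance

variable {X Y : Type*} [PseudoMetricSpace X] [PseudoMetricSpace Y] (f : X → Y) (c : ℝ)

lemma bddBelow_range_dist_add_dist (x : X) (y : Y) :
    BddBelow (Set.range fun x' => dist x x' + c + dist (f x') y) :=
  ⟨c, by
    rintro _ ⟨x', rfl⟩
    linarith [dist_nonneg (x := x) (y := x'), dist_nonneg (x := f x') (y := y)]⟩

lemma iInf_dist_add_dist_le (x : X) (y : Y) :
    ⨅ x', dist x x' + c + dist (f x') y ≤ c + dist (f x) y := by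
  simpa using ciInf_le (bddBelow_range_dist_add_dist f c x y) x

lemma iInf_dist_add_dist_self_le (x : X) :
    ⨅ x', dist x x' + c + dist (f x') (f x) ≤ c := by
  simpa using iInf_dist_add_dist_le f c x (f x)

end InducedDistance

theorem df_is_maximal_general
    {X Y : Type*} [MetricSpace X] [MetricSpace Y]
    (f : X → Y) (C : ℝ)
    (df : X → Y → ℝ)
    (hdf : ∀ x y, df x y = ⨅ x' : X, dist x x' + C / 2 + dist (f x') y)
    (D : GlueMetric X Y) (h : ℝ → ℝ) (hmono : Monotone h)
    (hdom : ∀ (x : X) (y : Y), D.d x y ≤ h (df x y)) :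
    ∃ K : ℝ, K = C / 2 + h (C / 2) ∧
      ∀ (x : X) (y : Y), df x y - K ≤ D.d x y := by
  refine ⟨C / 2 + h (C / 2), rfl, fun x y => ?_⟩
  have hdf_le : df x y ≤ C / 2 + dist (f x) y := hdf x y ▸ iInf_dist_add_dist_le f _ x y
  have hD_self : D.d x (f x) ≤ h (C / 2) :=
    (hdom x (f x)).trans (hmono (hdf x (f x) ▸ iInf_dist_add_dist_self_le f _ x))
  calc df x y - (C / 2 + h (C / 2)) ≤ dist (f x) y - D.d x (f x) := by linarith
    _ ≤ D.d x y := by linarith [D.tri₃ x (f x) y]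

theorem df_is_maximal
    {X Y : Type*} [MetricSpace X] [MetricSpace Y] [Nonempty X]
    (f : X → Y) (C : ℝ) (hC : 0 < C)
    (hf : ∀ x x' : X, |dist (f x) (f x') - dist x x'| ≤ C)
    (df : X → Y → ℝ)
    (hdf : ∀ x y, df x y = ⨅ x' : X, dist x x' + C / 2 + dist (f x') y)
    (D : GlueMetric X Y) (h : ℝ → ℝ) (hmono : Monotone h)
    (hdom : ∀ (x : X) (y : Y), D.d x y ≤ h (df x y)) :
    ∃ K : ℝ, K = C / 2 + h (C / 2) ∧
      ∀ (x : X) (y : Y), df x y - K ≤ D.d x y :=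
  df_is_maximal_general f C df hdf D h hmono hdom
end

section
/- Let X ⊂ ℤ be given by X = {x_n : n ∈ ℤ}, where x_n = −2n for n ≤ 0, x_{2n} = 4n and x_{2n−1} = 4n − 3 for n > 0, with the metric inherited from ℤ. Then the map f : X → X defined by f(x_n) = x_{−n} is an almost isometry: there is a constant C with |d(f(x_n), f(x_m)) − d(x_n, x_m)| ≤ C for all n, m ∈ ℤ. -/
/-- The sequence of points of `X ⊂ ℤ`: `x n = -2n` for `n ≤ 0`,
`x (2k) = 4k` and `x (2k-1) = 4k-3` for `n > 0`. -/
def xseq (n : ℤ) : ℤ :=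
  if n ≤ 0 then -2 * n else if n % 2 = 0 then 2 * n else 2 * n - 1

/-!
Every point `x n` lies within `1` of `2 |n|`, which does not change under `n ↦ -n`. So the flip
moves each point of `X` by at most `1`, and a map moving every point by at most `K` distorts
every distance by at most `2 K`.
-/

theorem abs_dist_sub_dist_le_of_forall_dist_le {ι α : Type*} [PseudoMetricSpace α]
    {u v : ι → α} {K : ℝ} (h : ∀ i, dist (u i) (v i) ≤ K) (i j : ι) :
    |dist (u i) (u j) - dist (v i) (v j)| ≤ 2 * K := by
  calc |dist (u i) (u j) - dist (v i) (v j)|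
      = dist (dist (u i) (u j)) (dist (v i) (v j)) := (Real.dist_eq _ _).symm
    _ ≤ dist (u i) (v i) + dist (u j) (v j) := dist_dist_dist_le _ _ _ _
    _ ≤ 2 * K := by linarith [h i, h j]

theorem xseq_mem_Icc (n : ℤ) : xseq n ∈ Set.Icc (2 * |n| - 1) (2 * |n|) := by
  unfold xseq
  split_ifs <;> simp only [Set.mem_Icc, Int.abs_eq_natAbs] <;> omega

theorem dist_xseq_neg_le_one (n : ℤ) : dist (xseq (-n)) (xseq n) ≤ 1 := by
  have hneg := xseq_mem_Icc (-n)
  have hpos := xseq_mem_Icc n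
  rw [abs_neg] at hneg
  rw [Int.dist_eq, ← Int.cast_sub, ← Int.cast_abs]
  exact_mod_cast abs_sub_le_iff.2 ⟨by linarith [hneg.2, hpos.1], by linarith [hneg.1, hpos.2]⟩

theorem flip_is_almost_isometry :
    ∃ C > 0, ∀ n m : ℤ,
      |dist (xseq (-n)) (xseq (-m)) - dist (xseq n) (xseq m)| ≤ C := by
  refine ⟨2, two_pos, fun n m => ?_⟩
  simpa using
    abs_dist_sub_dist_le_of_forall_dist_le (u := fun k => xseq (-k)) dist_xseq_neg_le_one n m
end
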